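/- Let ξ ∈ (0,1), η ∈ (ξ,1), and let d be the smallest index with a_d ≤ ξx. (i) If (log ξ)/(log η) is not an integer and x ≥ max( (1 − η²ξ)/(ξ(1−η)²) , (⌊(log ξ)/(log η)⌋ + 2)/(ξ − η^{⌊(log ξ)/(log η)⌋ + 1}) , 1/(η^{⌊(log ξ)/(log η)⌋} − ξ) ), then d = ⌊(log ξ)/(log η)⌋. (ii) If (log ξ)/(log η) is an integer and x ≥ max( (1 − η²ξ)/(ξ(1−η)²) , ((log ξ)/(log η) + 2)/(ξ(1−η)) ), then d ∈ { (log ξ)/(log η) − 1 , (log ξ)/(log η) }. -/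

import Mathlib

/-!
Starting from `⌈x⌉`, each step multiplies by `η` and rounds up, so the rounding errors add up to
at most `i` after `i` steps: `η ^ (i + 1) * x ≤ a_i ≤ η ^ (i + 1) * (x + 1) + i`. For `x` large the
error term is negligible against `ξ * x`, so `d` is pinned down by comparing `ξ` with the powers
of `η`, i.e. `log ξ / log η = logb η ξ` with the integers. When this ratio is an integer `M`, then
`ξ = η ^ M`, so the lower bound `ξ * x ≤ a_(M-1)` can be an equality and `d` may be `M - 1`.
-/

open Filter Topology

/-- `seqB η x i = f^i(⌈x⌉)` where `f(y) = ⌈η y⌉`. -/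
noncomputable def seqB (η x : ℝ) (i : ℕ) : ℝ :=
  (fun y : ℝ => ((⌈η * y⌉ : ℤ) : ℝ))^[i] ((⌈x⌉ : ℤ) : ℝ)

/-- `seqA η x i = η * seqB η x i`. -/
noncomputable def seqA (η x : ℝ) (i : ℕ) : ℝ := η * seqB η x i

lemma seqB_succ (η x : ℝ) (i : ℕ) : seqB η x (i + 1) = ⌈η * seqB η x i⌉ := by
  simp only [seqB, Function.iterate_succ_apply']

section Bounds

variable {η : ℝ} (x : ℝ)

lemma pow_mul_le_seqB (hη : 0 ≤ η) : ∀ i, η ^ i * x ≤ seqB η x i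
  | 0 => by simpa [seqB] using Int.le_ceil x
  | i + 1 => by
      rw [seqB_succ, pow_succ', mul_assoc]
      exact (mul_le_mul_of_nonneg_left (pow_mul_le_seqB hη i) hη).trans (Int.le_ceil _)

lemma seqB_lt (hη₀ : 0 ≤ η) (hη₁ : η ≤ 1) : ∀ i, seqB η x i < η ^ i * (x + 1) + i
  | 0 => by simpa [seqB] using Int.ceil_lt_add_one x
  | i + 1 => by
      have hi : η * i ≤ i := mul_le_of_le_one_left i.cast_nonneg hη₁
      have hb := mul_le_mul_of_nonneg_left (seqB_lt hη₀ hη₁ i).le hη₀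
      rw [seqB_succ]
      calc (⌈η * seqB η x i⌉ : ℝ) < η * seqB η x i + 1 := Int.ceil_lt_add_one _
        _ ≤ η * (η ^ i * (x + 1) + i) + 1 := by linarith
        _ = η ^ (i + 1) * (x + 1) + (η * i + 1) := by ring
        _ ≤ η ^ (i + 1) * (x + 1) + (i + 1 : ℕ) := by push_cast; linarith

lemma pow_succ_mul_le_seqA (hη : 0 ≤ η) (i : ℕ) : η ^ (i + 1) * x ≤ seqA η x i := by
  rw [seqA, pow_succ', mul_assoc]
  exact mul_le_mul_of_nonneg_left (pow_mul_le_seqB x hη i) hη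

lemma seqA_le (hη₀ : 0 ≤ η) (hη₁ : η ≤ 1) (i : ℕ) :
    seqA η x i ≤ η ^ (i + 1) * (x + 1) + i := by
  have hi : η * i ≤ i := mul_le_of_le_one_left i.cast_nonneg hη₁
  have hb := mul_le_mul_of_nonneg_left (seqB_lt x hη₀ hη₁ i).le hη₀
  calc seqA η x i ≤ η * (η ^ i * (x + 1) + i) := hb
    _ = η ^ (i + 1) * (x + 1) + η * i := by ring
    _ ≤ η ^ (i + 1) * (x + 1) + i := by linarith

end Bounds

section FirstIndex

variable {ξ η x : ℝ} {d : ℕ}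

lemma le_of_seqA_le_of_lt_pow (hη₀ : 0 ≤ η) (hη₁ : η ≤ 1) (hx : 0 < x)
    (hd : seqA η x d ≤ ξ * x) {n : ℕ} (hn : ξ < η ^ n) : n ≤ d := by
  by_contra! hdn
  have hpow : η ^ n ≤ η ^ (d + 1) := pow_le_pow_of_le_one hη₀ hη₁ hdn
  have := pow_succ_mul_le_seqA x hη₀ d
  nlinarith

lemma le_of_forall_lt_seqA (hη₀ : 0 ≤ η) (hη₁ : η ≤ 1)
    (hd : ∀ i < d, ξ * x < seqA η x i) {n : ℕ} (hn : n + 2 ≤ (ξ - η ^ (n + 1)) * x) :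
    d ≤ n := by
  by_contra! hnd
  have hpow : η ^ (n + 1) ≤ 1 := pow_le_one₀ hη₀ hη₁
  linarith [hd n hnd, seqA_le x hη₀ hη₁ n]

lemma eq_of_pow_succ_lt_of_lt_pow (hη : η ∈ Set.Ioo 0 1) (hd₁ : seqA η x d ≤ ξ * x)
    (hd₂ : ∀ i < d, ξ * x < seqA η x i) {K : ℕ} (hlt : η ^ (K + 1) < ξ) (hgt : ξ < η ^ K)
    (hx : K + 2 ≤ (ξ - η ^ (K + 1)) * x) : d = K := by
  have hx₀ : 0 < x :=
    pos_of_mul_pos_right (by linarith [K.cast_nonneg (α := ℝ)]) (sub_pos.2 hlt).le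
  exact le_antisymm (le_of_forall_lt_seqA hη.1.le hη.2.le hd₂ hx)
    (le_of_seqA_le_of_lt_pow hη.1.le hη.2.le hx₀ hd₁ hgt)

lemma eq_or_succ_eq_of_eq_pow (hη : η ∈ Set.Ioo 0 1) (hd₁ : seqA η x d ≤ ξ * x)
    (hd₂ : ∀ i < d, ξ * x < seqA η x i) {M : ℕ} (hM : 1 ≤ M) (hξ : ξ = η ^ M)
    (hx : M + 2 ≤ ξ * (1 - η) * x) : d + 1 = M ∨ d = M := by
  obtain ⟨hη₀, hη₁⟩ := hη
  have hξ₀ : 0 < ξ * (1 - η) := by rw [hξ]; exact mul_pos (pow_pos hη₀ M) (sub_pos.2 hη₁)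
  have hx₀ : 0 < x := pos_of_mul_pos_right (by linarith [M.cast_nonneg (α := ℝ)]) hξ₀.le
  have hup : d ≤ M := le_of_forall_lt_seqA hη₀.le hη₁.le hd₂ <| by
    rwa [pow_succ, ← hξ, ← mul_one_sub]
  have hlow : M - 1 ≤ d := le_of_seqA_le_of_lt_pow hη₀.le hη₁.le hx₀ hd₁ <| by
    rw [hξ, ← Nat.sub_add_cancel hM, pow_succ]
    exact mul_lt_of_lt_one_right (pow_pos hη₀ _) hη₁
  omega

lemma one_lt_logb (hη : η ∈ Set.Ioo 0 1) (hξ₀ : 0 < ξ) (hξη : ξ < η) :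
    1 < Real.logb η ξ :=
  (Real.lt_logb_iff_rpow_lt_of_base_lt_one hη.1 hη.2 hξ₀).2 (by rwa [Real.rpow_one])

lemma natCast_eq_floor_logb (hη : η ∈ Set.Ioo 0 1) (hξ₀ : 0 < ξ)
    (hξη : ξ < η) (hd₁ : seqA η x d ≤ ξ * x) (hd₂ : ∀ i < d, ξ * x < seqA η x i)
    (hr : ¬ ∃ m : ℤ, (m : ℝ) = Real.logb η ξ)
    (hx : ((⌊Real.logb η ξ⌋ : ℝ) + 2) / (ξ - η ^ (⌊Real.logb η ξ⌋ + 1)) ≤ x) :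
    (d : ℤ) = ⌊Real.logb η ξ⌋ := by
  obtain ⟨K, hK⟩ := Int.eq_ofNat_of_zero_le <|
    Int.floor_nonneg.2 (zero_le_one.trans (one_lt_logb hη hξ₀ hξη).le)
  have hKlt : (K : ℝ) < Real.logb η ξ := by
    have := (Int.floor_le (Real.logb η ξ)).lt_of_ne fun h => hr ⟨_, h⟩
    rwa [hK, Int.cast_natCast] at this
  have hltK : Real.logb η ξ < K + 1 := by
    have := Int.lt_floor_add_one (Real.logb η ξ)
    rwa [hK, Int.cast_natCast] at this
  have hlt : η ^ (K + 1) < ξ := by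
    rw [← Real.rpow_natCast, Nat.cast_add_one]
    exact (Real.logb_lt_iff_lt_rpow_of_base_lt_one hη.1 hη.2 hξ₀).1 hltK
  have hgt : ξ < η ^ K := by
    rw [← Real.rpow_natCast]
    exact (Real.lt_logb_iff_rpow_lt_of_base_lt_one hη.1 hη.2 hξ₀).1 hKlt
  simp only [hK, Int.cast_natCast, ← Nat.cast_add_one, zpow_natCast] at hx
  rw [div_le_iff₀ (sub_pos.2 hlt), mul_comm] at hx
  rw [hK, eq_of_pow_succ_lt_of_lt_pow hη hd₁ hd₂ hlt hgt hx]

lemma eq_logb_sub_one_or_eq_logb (hη : η ∈ Set.Ioo 0 1) (hξ₀ : 0 < ξ)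
    (hξη : ξ < η) (hd₁ : seqA η x d ≤ ξ * x) (hd₂ : ∀ i < d, ξ * x < seqA η x i)
    (hr : ∃ m : ℤ, (m : ℝ) = Real.logb η ξ)
    (hx : (Real.logb η ξ + 2) / (ξ * (1 - η)) ≤ x) :
    (d : ℝ) = Real.logb η ξ - 1 ∨ (d : ℝ) = Real.logb η ξ := by
  obtain ⟨m, hm⟩ := hr
  have hm₁ : 1 ≤ m := by exact_mod_cast ((one_lt_logb hη hξ₀ hξη).trans_eq hm.symm).le
  obtain ⟨M, rfl⟩ := Int.eq_ofNat_of_zero_le (zero_le_one.trans hm₁)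
  rw [Int.cast_natCast] at hm
  have hξ : ξ = η ^ M := by
    rw [← Real.rpow_natCast, hm, Real.rpow_logb hη.1 hη.2.ne hξ₀]
  rw [← hm, div_le_iff₀ (by rw [hξ]; exact mul_pos (pow_pos hη.1 M) (sub_pos.2 hη.2)),
    mul_comm] at hx
  rw [← hm]
  rcases eq_or_succ_eq_of_eq_pow hη hd₁ hd₂ (by exact_mod_cast hm₁) hξ hx with h | h
  · left; rw [← h]; push_cast; ring
  · right; rw [h]

end FirstIndex

theorem stmt_19 (ξ η x : ℝ) (hξ : ξ ∈ Set.Ioo (0 : ℝ) 1) (hη : η ∈ Set.Ioo ξ 1)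
    (d : ℕ) (hd1 : seqA η x d ≤ ξ * x) (hd2 : ∀ i : ℕ, i < d → ξ * x < seqA η x i) :
    ((¬ ∃ m : ℤ, (m : ℝ) = Real.log ξ / Real.log η) →
      max (max ((1 - η ^ 2 * ξ) / (ξ * (1 - η) ^ 2))
            (((⌊Real.log ξ / Real.log η⌋ : ℝ) + 2) /
              (ξ - η ^ (⌊Real.log ξ / Real.log η⌋ + 1))))
          (1 / (η ^ ⌊Real.log ξ / Real.log η⌋ - ξ)) ≤ x →
      (d : ℤ) = ⌊Real.log ξ / Real.log η⌋) ∧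
    ((∃ m : ℤ, (m : ℝ) = Real.log ξ / Real.log η) →
      max ((1 - η ^ 2 * ξ) / (ξ * (1 - η) ^ 2))
          ((Real.log ξ / Real.log η + 2) / (ξ * (1 - η))) ≤ x →
      ((d : ℝ) = Real.log ξ / Real.log η - 1 ∨ (d : ℝ) = Real.log ξ / Real.log η)) := by
  obtain ⟨hξ₀, -⟩ := hξ
  obtain ⟨hξη, hη₁⟩ := hη
  have hη : η ∈ Set.Ioo 0 1 := ⟨hξ₀.trans hξη, hη₁⟩
  rw [Real.log_div_log]
  exact ⟨fun hr hx => natCast_eq_floor_logb hη hξ₀ hξη hd1 hd2 hr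
      ((le_max_right _ _).trans ((le_max_left _ _).trans hx)),
    fun hr hx => eq_logb_sub_one_or_eq_logb hη hξ₀ hξη hd1 hd2 hr ((le_max_right _ _).trans hx)⟩
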